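/- Let m ∣ n with m > 2, and for i ∈ {0, ..., m-1} let Y_i = ∑_{j=0}^{n/m - 1} X_{i + mj}, a polynomial in the variables X_0, ..., X_{n-1}. Let Ψ_m = ∏_{i ∈ (ℤ/mℤ)^×} (∑_{j ∈ ℤ/mℤ} ε_m^{ij} X_j) over ℂ, where ε_m = e^{2π√(-1)/m}. Then a permutation α of {0, 1, ..., n-1} fixes the polynomial Ψ_m(Y_0, ..., Y_{m-1}) (acting by permuting the variables X_0, ..., X_{n-1}) if and only if there exists an affine permutation τ ∈ AGL(1, ℤ/mℤ) such that α(x) ≡ τ(x mod m) (mod m) for all x ∈ {0, ..., n-1}; that is, the stabilizer of Ψ_m(Y_0, ..., Y_{m-1}) is the wreath product Stab(Ψ_m) ≀ S_{n/m}, consisting of the permutations mapping each block I_i = {i + mj : 0 ≤ j ≤ n/m - 1} onto the block I_{τ(i)} for some τ in the stabilizer of Ψ_m. -/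

import Mathlib

/-!
The factors `L i = ∑ₓ ψ(i·x) Xₓ` of `Ψ_m(Y)`, with `ψ` the additive character `k ↦ ε^k` of
`ℤ/mℤ` and `i` running over the units, are irreducible linear forms. If `α` fixes the product,
unique factorization forces the image of `L 1` to be a scalar multiple of some `L a`; comparing
coefficients and using that `ψ` is injective makes `α` affine modulo `m`. Conversely, for
`α(x) ≡ a x + b` each `L i` is sent to `ψ(i b) · L (i a)`, and the scalars cancel in pairs
`i, -i` because `-1 ≠ 1` in `ℤ/mℤ` when `m > 2`.
-/

open MvPolynomial

section LinearForm

variable {σ τ R : Type*} [Fintype σ] [Fintype τ]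

noncomputable def linearForm [CommSemiring R] (c : σ → R) : MvPolynomial σ R :=
  ∑ x, C (c x) * X x

theorem linearForm_eq_sumSMulX [CommRing R] (c : σ → R) :
    linearForm c = sumSMulX (Finsupp.equivFunOnFinite.symm c) := by
  rw [sumSMulX, Finsupp.linearCombination_apply, Finsupp.sum_fintype _ _ (by simp)]
  simp [linearForm, smul_eq_C_mul]

theorem coeff_single_one_linearForm [CommRing R] (c : σ → R) (y : σ) :
    (linearForm c).coeff (Finsupp.single y 1) = c y := by
  simp [linearForm_eq_sumSMulX, coeff_sumSMulX]

theorem rename_linearForm [CommSemiring R] (e : σ ≃ τ) (c : σ → R) :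
    rename e (linearForm c) = linearForm (c ∘ e.symm) := by
  simp only [linearForm, map_sum, map_mul, rename_C, rename_X]
  exact Fintype.sum_equiv e _ _ fun x => by simp

theorem linearForm_mul_C [CommSemiring R] (c : σ → R) (u : R) :
    linearForm c * C u = linearForm fun x => c x * u := by
  simp only [linearForm, Finset.sum_mul, C_mul]
  exact Finset.sum_congr rfl fun x _ => mul_right_comm _ _ _

theorem exists_mul_eq_of_associated_linearForm [CommRing R] [IsReduced R] {c d : σ → R}
    (h : Associated (linearForm c) (linearForm d)) : ∃ u : R, ∀ x, c x * u = d x := by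
  obtain ⟨u, hu⟩ := h
  obtain ⟨r, -, hr⟩ := isUnit_iff_eq_C_of_isReduced.mp u.isUnit
  refine ⟨r, fun x => ?_⟩
  rw [hr, linearForm_mul_C] at hu
  simpa [coeff_single_one_linearForm] using congrArg (coeff (Finsupp.single x 1)) hu

theorem irreducible_linearForm {K : Type*} [Field K] {c : σ → K} {y : σ} (hy : c y ≠ 0) :
    Irreducible (linearForm c) := by
  rw [linearForm_eq_sumSMulX]
  refine irreducible_sumSMulX _ ⟨y, by simpa using hy⟩ fun r hr => ?_
  refine isUnit_iff_ne_zero.mpr fun hr0 => hy ?_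
  simpa [hr0] using hr y

end LinearForm

theorem Finset.sum_mul_sum_ite_eq {ι κ R : Type*} [Fintype ι] [Fintype κ] [DecidableEq κ]
    [NonUnitalNonAssocSemiring R] (f : κ → R) (g : ι → κ) (v : ι → R) :
    ∑ k, f k * ∑ x, (if g x = k then v x else 0) = ∑ x, f (g x) * v x := by
  simp only [Finset.mul_sum, mul_ite, mul_zero]
  rw [Finset.sum_comm]
  simp

theorem AddChar.prod_units_mul_eq_one {A M : Type*} [CommRing A] [Fintype Aˣ] [CommMonoid M]
    (hA : (-1 : A) ≠ 1) (ψ : AddChar A M) (b : A) : ∏ i : Aˣ, ψ (i * b) = 1 := by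
  refine Finset.prod_ninvolution (fun i => -i) (fun i => ?_) (fun i _ hi => hA ?_)
    (fun _ => Finset.mem_univ _) neg_neg
  · rw [← map_add_eq_mul, Units.val_neg, neg_mul, add_neg_cancel, map_zero_eq_one]
  · simpa using congrArg (fun u : Aˣ => ((u * i⁻¹ : Aˣ) : A)) hi

theorem AddChar.eq_add_sub_of_mul_eq {σ A M : Type*} [CommRing A] [CommMonoid M]
    {ψ : AddChar A M} (hψ : Function.Injective ψ) {s t : σ → A} {u : M}
    (h : ∀ x, ψ (s x) * u = ψ (t x)) (x₀ x : σ) : s x = t x + (s x₀ - t x₀) := by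
  have : ψ (s x + t x₀) = ψ (s x₀ + t x) := by
    rw [map_add_eq_mul, map_add_eq_mul, ← h, ← h, mul_left_comm]
  linear_combination hψ this

theorem MvPolynomial.rename_symm_eq_self_iff {σ R : Type*} [CommSemiring R] (e : Equiv.Perm σ)
    (p : MvPolynomial σ R) : rename e.symm p = p ↔ rename e p = p := by
  simpa [eq_comm (a := p)] using (renameEquiv R e).symm_apply_eq (x := p) (y := p)

section CharForm

variable {σ A K : Type*} [Fintype σ] [CommRing A] [Field K]
  (ψ : AddChar A K) (r : σ → A)

noncomputable def charForm (i : A) : MvPolynomial σ K :=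
  linearForm fun x => ψ (i * r x)

variable {ψ r}

theorem rename_symm_charForm_of_affine {α : Equiv.Perm σ} {a b : A}
    (hα : ∀ x, r (α x) = a * r x + b) (i : A) :
    rename α.symm (charForm ψ r i) = C (ψ (i * b)) * charForm ψ r (i * a) := by
  rw [charForm, rename_linearForm, charForm, mul_comm, linearForm_mul_C]
  congr 1
  funext x
  rw [Function.comp_apply, Equiv.symm_symm, hα, mul_add, ψ.map_add_eq_mul, mul_assoc]

theorem rename_symm_prod_charForm_of_affine [Fintype Aˣ] (hA : (-1 : A) ≠ 1)
    {α : Equiv.Perm σ} {a : Aˣ} {b : A} (hα : ∀ x, r (α x) = a * r x + b) :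
    rename α.symm (∏ i : Aˣ, charForm ψ r i) = ∏ i : Aˣ, charForm ψ r i := by
  rw [map_prod]
  simp_rw [rename_symm_charForm_of_affine hα]
  rw [Finset.prod_mul_distrib, ← map_prod, ψ.prod_units_mul_eq_one hA, map_one, one_mul]
  exact Fintype.prod_equiv (Equiv.mulRight a) _ _ fun i => by simp

theorem exists_affine_of_rename_symm_prod_charForm [Fintype Aˣ] (hψ : Function.Injective ψ)
    {α : Equiv.Perm σ}
    (h : rename α.symm (∏ i : Aˣ, charForm ψ r i) = ∏ i : Aˣ, charForm ψ r i) :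
    ∃ (a : Aˣ) (b : A), ∀ x, r (α x) = a * r x + b := by
  obtain _ | ⟨⟨x₀⟩⟩ := isEmpty_or_nonempty σ
  · exact ⟨1, 0, isEmptyElim⟩
  have hirr : ∀ c : σ → A, Irreducible (linearForm fun x => ψ (c x)) := fun c =>
    irreducible_linearForm (y := x₀) (ψ.val_isUnit _).ne_zero
  have hL1 : rename α.symm (charForm ψ r 1) = linearForm fun x => ψ (r (α x)) := by
    rw [charForm, rename_linearForm]
    simp only [one_mul, Equiv.symm_symm]
    rfl
  have hdvd : linearForm (fun x => ψ (r (α x))) ∣ ∏ i : Aˣ, charForm ψ r i := by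
    rw [← hL1, ← h]
    have := Finset.dvd_prod_of_mem (fun i : Aˣ => charForm ψ r i) (Finset.mem_univ 1)
    exact map_dvd _ (by simpa using this)
  obtain ⟨a, -, hdvd_a⟩ := ((hirr _).prime).exists_mem_finset_dvd hdvd
  obtain ⟨u, hu⟩ :=
    exists_mul_eq_of_associated_linearForm ((hirr _).associated_of_dvd (hirr _) hdvd_a)
  exact ⟨a, _, ψ.eq_add_sub_of_mul_eq hψ hu x₀⟩

theorem rename_prod_charForm_eq_iff [Fintype Aˣ] (hA : (-1 : A) ≠ 1)
    (hψ : Function.Injective ψ) (α : Equiv.Perm σ) :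
    rename α (∏ i : Aˣ, charForm ψ r i) = ∏ i : Aˣ, charForm ψ r i ↔
      ∃ (a : Aˣ) (b : A), ∀ x, r (α x) = a * r x + b := by
  rw [← rename_symm_eq_self_iff]
  exact ⟨exists_affine_of_rename_symm_prod_charForm hψ, fun ⟨_, _, hα⟩ =>
    rename_symm_prod_charForm_of_affine hA hα⟩

end CharForm

theorem stmt5_general (m n : ℕ) (hm : 2 < m) [NeZero m]
    (ε : ℂ) (hε : ε = Complex.exp (2 * Real.pi * Complex.I / m))
    (Y : ZMod m → MvPolynomial (Fin n) ℂ)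
    (hY : ∀ k : ZMod m, Y k = ∑ x : Fin n, if ((x : ℕ) : ZMod m) = k then X x else 0)
    (P : MvPolynomial (Fin n) ℂ)
    (hP : P = ∏ i : (ZMod m)ˣ, ∑ k : ZMod m, C (ε ^ (((i : ZMod m) * k).val)) * Y k)
    (α : Equiv.Perm (Fin n)) :
    rename α P = P ↔
      ∃ (a : (ZMod m)ˣ) (b : ZMod m),
        ∀ x : Fin n, (((α x : ℕ)) : ZMod m) = (a : ZMod m) * ((x : ℕ) : ZMod m) + b := by
  have hζ : IsPrimitiveRoot ε m := hε ▸ Complex.isPrimitiveRoot_exp m (NeZero.ne m)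
  let ψ : AddChar (ZMod m) ℂ := AddChar.zmodChar m hζ.pow_eq_one
  have hψ : Function.Injective ψ := fun s t hst =>
    ZMod.val_injective m (hζ.pow_inj (ZMod.val_lt s) (ZMod.val_lt t) hst)
  have hP' : P = ∏ i : (ZMod m)ˣ, charForm ψ (fun x : Fin n => ((x : ℕ) : ZMod m)) i := by
    simp_rw [hP, hY, Finset.sum_mul_sum_ite_eq]
    rfl
  have : Fact (2 < m) := ⟨hm⟩
  rw [hP']
  exact rename_prod_charForm_eq_iff ZMod.neg_one_ne_one hψ α

/-- Let m ∣ n with m > 2, and Y_k = ∑_{x ≡ k (mod m)} X_x ∈ ℂ[X_0,...,X_{n-1}]. A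
permutation α of {0,...,n-1} fixes Ψ_m(Y_0,...,Y_{m-1}) iff there is an affine
permutation τ ∈ AGL(1, ℤ/mℤ) with α(x) ≡ τ(x mod m) (mod m) for all x; i.e. the
stabilizer is the wreath product Stab(Ψ_m) ≀ S_{n/m}. -/
theorem stmt5 (m n : ℕ) (hm : 2 < m) [NeZero m] (hmn : m ∣ n) (hn : 0 < n)
    (ε : ℂ) (hε : ε = Complex.exp (2 * Real.pi * Complex.I / m))
    (Y : ZMod m → MvPolynomial (Fin n) ℂ)
    (hY : ∀ k : ZMod m, Y k = ∑ x : Fin n, if ((x : ℕ) : ZMod m) = k then X x else 0)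
    (P : MvPolynomial (Fin n) ℂ)
    (hP : P = ∏ i : (ZMod m)ˣ, ∑ k : ZMod m, C (ε ^ (((i : ZMod m) * k).val)) * Y k)
    (α : Equiv.Perm (Fin n)) :
    rename α P = P ↔
      ∃ (a : (ZMod m)ˣ) (b : ZMod m),
        ∀ x : Fin n, (((α x : ℕ)) : ZMod m) = (a : ZMod m) * ((x : ℕ) : ZMod m) + b :=
  stmt5_general m n hm ε hε Y hY P hP α
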